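/- The function z ↦ R_iid(s*(z), z) is strictly increasing on the interval [max{0, 2D − σ²}, ∞). -/

import Mathlib

noncomputable section

/-- `R_iid(s, z) = (1/2) log(1+2s) + s z/((1+2s)(σ²-D)) - s D/(σ²-D)`. -/
def Riid (σ2 D s z : ℝ) : ℝ :=
  (1 / 2) * Real.log (1 + 2 * s) + s * z / ((1 + 2 * s) * (σ2 - D)) - s * D / (σ2 - D)

/-- `s*(z) = max{0, (σ² - 3D + √((σ²-D)² + 4 z D))/(4D)}`. -/
def sStar (σ2 D z : ℝ) : ℝ :=
  max 0 ((σ2 - 3 * D + Real.sqrt ((σ2 - D) ^ 2 + 4 * z * D)) / (4 * D))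

lemma aux_g_mono (a D : ℝ) (ha : 0 < a) (hD : 0 < D) :
    StrictMonoOn (fun u => (1/2) * Real.log u + D * (u - 1)^2 / (2 * a) - (u - 1)/2)
      (Set.Ici (max 1 (a / D))) := by
  have hc1 : (1:ℝ) ≤ max 1 (a / D) := le_max_left _ _
  apply strictMonoOn_of_deriv_pos (convex_Ici _)
  · have hsub : Set.Ici (max 1 (a / D)) ⊆ {(0:ℝ)}ᶜ := by
      intro x hx
      simp only [Set.mem_Ici] at hx
      simp only [Set.mem_compl_iff, Set.mem_singleton_iff]
      nlinarith
    exact ((continuousOn_const.mul (Real.continuousOn_log.mono hsub)).add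
      (by fun_prop)).sub (by fun_prop)
  · intro u hu
    rw [interior_Ici] at hu
    simp only [Set.mem_Ioi] at hu
    have hu1 : 1 < u := lt_of_le_of_lt hc1 hu
    have hu0 : 0 < u := by linarith
    have huaD : a / D < u := lt_of_le_of_lt (le_max_right _ _) hu
    have h2Du : a < 2 * D * u := by
      have := (div_lt_iff₀ hD).mp huaD
      nlinarith
    have hder : HasDerivAt (fun u => (1/2) * Real.log u + D * (u - 1)^2 / (2 * a) - (u - 1)/2)
        ((1/2) * u⁻¹ + D * (2 * (u - 1)) / (2 * a) - 1/2) u := by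
      have h1 : HasDerivAt Real.log u⁻¹ u := Real.hasDerivAt_log (ne_of_gt hu0)
      have h2 : HasDerivAt (fun u : ℝ => (u - 1)^2) (2 * (u - 1)) u := by
        have := ((hasDerivAt_id u).sub_const 1).pow 2
        simpa [Pi.pow_def] using this
      have h3 : HasDerivAt (fun u : ℝ => (u - 1)/2) (1/2) u := by
        have := ((hasDerivAt_id u).sub_const 1).div_const 2
        simpa using this
      exact ((h1.const_mul (1/2)).add ((h2.const_mul D).div_const (2*a))).sub h3
    rw [hder.deriv]
    have key : (1/2) * u⁻¹ + D * (2 * (u - 1)) / (2 * a) - 1/2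
        = (u - 1) * (2 * D * u - a) / (2 * u * a) := by
      field_simp
      ring
    rw [key]
    exact div_pos (mul_pos (by linarith) (by linarith)) (by positivity)

lemma Riid_eq (σ2 D z : ℝ) (hD : 0 < D) (hDσ : D < σ2) (hz0 : 0 ≤ z) (hz2 : 2 * D - σ2 ≤ z) :
    Riid σ2 D (sStar σ2 D z) z =
      (fun u => (1/2) * Real.log u + D * (u - 1)^2 / (2 * (σ2 - D)) - (u - 1)/2)
        ((σ2 - D + Real.sqrt ((σ2 - D) ^ 2 + 4 * z * D)) / (2 * D)) := by
  set t := Real.sqrt ((σ2 - D) ^ 2 + 4 * z * D) with htdef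
  have ha : (0:ℝ) < σ2 - D := by linarith
  have ht0 : 0 ≤ t := Real.sqrt_nonneg _
  have ht2 : t ^ 2 = (σ2 - D) ^ 2 + 4 * z * D := Real.sq_sqrt (by nlinarith)
  have htge : 3 * D - σ2 ≤ t := by nlinarith [sq_nonneg (t - (3 * D - σ2)), sq_nonneg (t + (3 * D - σ2))]
  have hs : sStar σ2 D z = (σ2 - 3 * D + t) / (4 * D) := by
    rw [sStar, max_eq_right]
    exact div_nonneg (by linarith) (by linarith)
  rw [hs, Riid]
  have hu : 1 + 2 * ((σ2 - 3 * D + t) / (4 * D)) = (σ2 - D + t) / (2 * D) := by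
    field_simp
    ring
  rw [hu]
  simp only
  have hU : (0:ℝ) < (σ2 - D + t) / (2 * D) := by positivity
  have hD' : (D:ℝ) ≠ 0 := ne_of_gt hD
  have ha' : (σ2 - D : ℝ) ≠ 0 := ne_of_gt ha
  have hU' : (σ2 - D + t) / (2 * D) ≠ 0 := ne_of_gt hU
  have hzval : z = (t ^ 2 - (σ2 - D) ^ 2) / (4 * D) := by
    field_simp
    linarith [ht2]
  have hrest : (σ2 - 3 * D + t) / (4 * D) * z / ((σ2 - D + t) / (2 * D) * (σ2 - D)) -
      (σ2 - 3 * D + t) / (4 * D) * D / (σ2 - D) =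
      D * ((σ2 - D + t) / (2 * D) - 1) ^ 2 / (2 * (σ2 - D)) - ((σ2 - D + t) / (2 * D) - 1) / 2 := by
    rw [hzval]
    have hst : σ2 - D + t ≠ 0 := by positivity
    field_simp
    ring
  linarith [hrest]

/-- The map `z ↦ R_iid(s*(z), z)` is strictly increasing on `[max{0, 2D - σ²}, ∞)`. -/
theorem Riid_sStar_strictMonoOn (σ2 D : ℝ) (hD : 0 < D) (hDσ : D < σ2) :
    StrictMonoOn (fun z => Riid σ2 D (sStar σ2 D z) z) (Set.Ici (max 0 (2 * D - σ2))) := by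
  intro z1 h1 z2 h2 hlt
  simp only [Set.mem_Ici, max_le_iff] at h1 h2
  obtain ⟨h10, h12⟩ := h1
  obtain ⟨h20, h22⟩ := h2
  have ha : (0:ℝ) < σ2 - D := by linarith
  have key : ∀ z : ℝ, 0 ≤ z → 2 * D - σ2 ≤ z →
      (σ2 - D + Real.sqrt ((σ2 - D) ^ 2 + 4 * z * D)) / (2 * D) ∈
        Set.Ici (max 1 ((σ2 - D) / D)) := by
    intro z hz0 hz2
    set t := Real.sqrt ((σ2 - D) ^ 2 + 4 * z * D) with htdef
    have ht0 : 0 ≤ t := Real.sqrt_nonneg _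
    have ht2 : t ^ 2 = (σ2 - D) ^ 2 + 4 * z * D := Real.sq_sqrt (by nlinarith)
    have htge : 3 * D - σ2 ≤ t := by
      nlinarith [sq_nonneg (t - (3 * D - σ2)), sq_nonneg (t + (3 * D - σ2))]
    have hta : σ2 - D ≤ t := by
      nlinarith [sq_nonneg (t - (σ2 - D)), sq_nonneg (t + (σ2 - D))]
    rw [Set.mem_Ici, max_le_iff]
    constructor
    · rw [le_div_iff₀ (by positivity)]
      linarith
    · rw [div_le_div_iff₀ hD (by positivity)]
      nlinarith
  simp only
  rw [Riid_eq σ2 D z1 hD hDσ h10 h12, Riid_eq σ2 D z2 hD hDσ h20 h22]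
  apply aux_g_mono (σ2 - D) D ha hD (key z1 h10 h12) (key z2 h20 h22)
  have hsq : Real.sqrt ((σ2 - D) ^ 2 + 4 * z1 * D) < Real.sqrt ((σ2 - D) ^ 2 + 4 * z2 * D) :=
    Real.sqrt_lt_sqrt (by nlinarith) (by nlinarith)
  apply div_lt_div_of_pos_right (by linarith) (by positivity)
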